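/- arXiv:2507.02491 — 5 statements merged into one kernel-verified Lean document; each statement's English description precedes it below -/
import Mathlib

section
/- Propositional equivalence of LTLf formulas implies language equivalence: if α ≡ β (their propositional abstractions α_P and β_P are equivalent Boolean formulas), then L(α) = L(β), i.e., for every finite nonempty word σ, σ,0 ⊨ α iff σ,0 ⊨ β. -/
inductive LTLf (P : Type) : Type where
  | tt : LTLf P
  | ff : LTLf P
  | atom (p : P) : LTLf P
  | not (φ : LTLf P) : LTLf P
  | and (φ ψ : LTLf P) : LTLf P
  | or (φ ψ : LTLf P) : LTLf P
  | wnext (φ : LTLf P) : LTLf P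
  | snext (φ : LTLf P) : LTLf P
  | untl (φ ψ : LTLf P) : LTLf P
  | release (φ ψ : LTLf P) : LTLf P
  | glob (φ : LTLf P) : LTLf P
  | fin (φ : LTLf P) : LTLf P
  deriving DecidableEq

/-- LTLf semantics over a finite word `σ` (a list of assignments), at position `i`. -/
def LTLf.Sat {P : Type} (σ : List (P → Bool)) : LTLf P → ℕ → Prop
  | .tt, _ => True
  | .ff, _ => False
  | .atom p, i => (σ.getD i (fun _ => false)) p = true
  | .not φ, i => ¬ LTLf.Sat σ φ i
  | .and φ ψ, i => LTLf.Sat σ φ i ∧ LTLf.Sat σ ψ i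
  | .or φ ψ, i => LTLf.Sat σ φ i ∨ LTLf.Sat σ ψ i
  | .wnext φ, i => i + 1 = σ.length ∨ LTLf.Sat σ φ (i + 1)
  | .snext φ, i => i + 1 < σ.length ∧ LTLf.Sat σ φ (i + 1)
  | .untl φ ψ, i => ∃ j, i ≤ j ∧ j < σ.length ∧ LTLf.Sat σ ψ j ∧
      ∀ k, i ≤ k → k < j → LTLf.Sat σ φ k
  | .release φ ψ, i => ∀ j, i ≤ j → j < σ.length →
      LTLf.Sat σ ψ j ∨ ∃ k, i ≤ k ∧ k < j ∧ LTLf.Sat σ φ k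
  | .glob φ, i => ∀ j, i ≤ j → j < σ.length → LTLf.Sat σ φ j
  | .fin φ, i => ∃ j, i ≤ j ∧ j < σ.length ∧ LTLf.Sat σ φ j

/-- Boolean evaluation of the propositional abstraction of an LTLf formula:
atoms and maximal temporal subformulas are treated as propositional variables,
interpreted by a valuation `v`. -/
def LTLf.BEval {P : Type} (v : LTLf P → Prop) : LTLf P → Prop
  | .tt => True
  | .ff => False
  | .not φ => ¬ LTLf.BEval v φ
  | .and φ ψ => LTLf.BEval v φ ∧ LTLf.BEval v ψ
  | .or φ ψ => LTLf.BEval v φ ∨ LTLf.BEval v ψ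
  | φ => v φ

/-- Propositional equivalence: the propositional abstractions are equivalent
Boolean formulas, i.e., agree under every valuation of the variables. -/
def LTLf.PropEquiv {P : Type} (α β : LTLf P) : Prop :=
  ∀ v : LTLf P → Prop, LTLf.BEval v α ↔ LTLf.BEval v β

theorem LTLf.bEval_sat {P : Type} (σ : List (P → Bool)) (i : ℕ) (φ : LTLf P) :
    LTLf.BEval (LTLf.Sat σ · i) φ ↔ LTLf.Sat σ φ i := by
  induction φ <;> simp_all only [LTLf.BEval, LTLf.Sat]

theorem LTLf.PropEquiv.sat_iff {P : Type} {α β : LTLf P} (h : LTLf.PropEquiv α β)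
    (σ : List (P → Bool)) (i : ℕ) : LTLf.Sat σ α i ↔ LTLf.Sat σ β i := by
  simpa only [LTLf.bEval_sat] using h (LTLf.Sat σ · i)

theorem propEquiv_implies_language_equiv {P : Type} (α β : LTLf P)
    (h : LTLf.PropEquiv α β) :
    ∀ σ : List (P → Bool), σ ≠ [] → (LTLf.Sat σ α 0 ↔ LTLf.Sat σ β 0) :=
  fun σ _ => h.sat_iff σ 0
end

section
/- An ordered, reduced MTBDD representation is canonical: two functions f, g : B^P → S (with P finitely ordered) have the same reduced ordered MTBDD if and only if f = g. -/
/-- MTBDDs (as decision trees; sharing of isomorphic subgraphs corresponds to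
equality of subtrees) over variables `Fin n` with terminal values in `S`. -/
inductive MTBDD (n : ℕ) (S : Type) : Type where
  | leaf (s : S) : MTBDD n S
  | node (p : Fin n) (lo hi : MTBDD n S) : MTBDD n S
  deriving DecidableEq

namespace MTBDD

/-- The function `B^P → S` denoted by an MTBDD. -/
def eval {n : ℕ} {S : Type} : MTBDD n S → (Fin n → Bool) → S
  | .leaf s, _ => s
  | .node p lo hi, w => if w p then eval hi w else eval lo w

/-- All branches test variables in strictly increasing order, starting at least at `b`. -/
def OrderedFrom {n : ℕ} {S : Type} : ℕ → MTBDD n S → Prop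
  | _, .leaf _ => True
  | b, .node p lo hi => b ≤ (p : ℕ) ∧ OrderedFrom ((p : ℕ) + 1) lo ∧ OrderedFrom ((p : ℕ) + 1) hi

/-- Ordered MTBDD. -/
def Ordered {n : ℕ} {S : Type} (m : MTBDD n S) : Prop := OrderedFrom 0 m

/-- Reduced MTBDD: no internal node has identical low and high successors
(isomorphic subgraphs being shared, they are represented by equal subtrees). -/
def Reduced {n : ℕ} {S : Type} : MTBDD n S → Prop
  | .leaf _ => True
  | .node _ lo hi => lo ≠ hi ∧ Reduced lo ∧ Reduced hi

end MTBDD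

/-!
Shannon expansion, by downward induction on the first variable `v` a diagram may test. The two
cofactors at `v` of a reduced diagram ordered from `v` are reduced and ordered from `v + 1`, and
they determine the diagram (`mk_cofactor`), since reducedness forbids a node at `v` with equal
children. Equal functions have equal cofactors, hence by induction equal cofactor diagrams, hence
equal diagrams; once no variable is left, both diagrams are leaves.
-/

namespace MTBDD

variable {n : ℕ} {S : Type}

def cofactor (v : Fin n) (x : Bool) : MTBDD n S → MTBDD n S
  | .leaf s => .leaf s
  | .node p lo hi => if p = v then (if x then hi else lo) else .node p lo hi

open scoped Classical in
noncomputable def mk (v : Fin n) (lo hi : MTBDD n S) : MTBDD n S :=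
  if lo = hi then lo else .node v lo hi

lemma eval_update_of_lt {b : ℕ} {m : MTBDD n S} (hm : OrderedFrom b m) {v : Fin n}
    (hv : (v : ℕ) < b) (w : Fin n → Bool) (x : Bool) :
    eval m (Function.update w v x) = eval m w := by
  induction m generalizing b with
  | leaf s => rfl
  | node p lo hi ihlo ihhi =>
    obtain ⟨hbp, hlo, hhi⟩ := hm
    have hpv : p ≠ v := fun h => by subst h; omega
    simp only [eval, Function.update_of_ne hpv, ihlo hlo (by omega), ihhi hhi (by omega)]

lemma eval_cofactor {v : Fin n} {m : MTBDD n S} (hm : OrderedFrom v m) (x : Bool)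
    (w : Fin n → Bool) : eval (cofactor v x m) w = eval m (Function.update w v x) := by
  cases m with
  | leaf s => rfl
  | node p lo hi =>
    obtain ⟨hvp, hlo, hhi⟩ := hm
    by_cases hpv : p = v
    · subst hpv
      cases x <;>
        simp [cofactor, eval, eval_update_of_lt hlo (Nat.lt_succ_self _),
          eval_update_of_lt hhi (Nat.lt_succ_self _)]
    · have hnode : OrderedFrom (v + 1) (node p lo hi) :=
        ⟨by omega, hlo, hhi⟩
      simp only [cofactor, if_neg hpv, eval_update_of_lt hnode (Nat.lt_succ_self _)]

lemma orderedFrom_cofactor {v : Fin n} {m : MTBDD n S} (hm : OrderedFrom v m) (x : Bool) :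
    OrderedFrom (v + 1) (cofactor v x m) := by
  cases m with
  | leaf s => trivial
  | node p lo hi =>
    obtain ⟨hvp, hlo, hhi⟩ := hm
    by_cases hpv : p = v
    · subst hpv
      cases x <;> simpa [cofactor]
    · simp only [cofactor, if_neg hpv]
      exact ⟨by omega, hlo, hhi⟩

lemma reduced_cofactor {m : MTBDD n S} (hm : Reduced m) (v : Fin n) (x : Bool) :
    Reduced (cofactor v x m) := by
  cases m with
  | leaf s => trivial
  | node p lo hi =>
    simp only [cofactor]
    split_ifs
    exacts [hm.2.2, hm.2.1, hm]

lemma mk_cofactor {m : MTBDD n S} (hm : Reduced m) (v : Fin n) :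
    mk v (cofactor v false m) (cofactor v true m) = m := by
  cases m with
  | leaf s => simp [cofactor, mk]
  | node p lo hi =>
    by_cases hpv : p = v
    · subst hpv
      simp [cofactor, mk, hm.1]
    · simp [cofactor, mk, hpv]

lemma exists_eq_leaf_of_orderedFrom {b : ℕ} {m : MTBDD n S} (hm : OrderedFrom b m)
    (hb : n ≤ b) : ∃ s, m = leaf s := by
  cases m with
  | leaf s => exact ⟨s, rfl⟩
  | node p lo hi => exact absurd hm.1 (by omega)

theorem eq_of_eval_eq {b : ℕ} {m₁ m₂ : MTBDD n S}
    (h₁o : OrderedFrom b m₁) (h₁r : Reduced m₁) (h₂o : OrderedFrom b m₂) (h₂r : Reduced m₂)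
    (he : ∀ w, eval m₁ w = eval m₂ w) : m₁ = m₂ := by
  by_cases hb : b < n
  · let v : Fin n := ⟨b, hb⟩
    have hcof (x : Bool) : cofactor v x m₁ = cofactor v x m₂ :=
      eq_of_eval_eq (orderedFrom_cofactor h₁o x) (reduced_cofactor h₁r v x)
        (orderedFrom_cofactor h₂o x) (reduced_cofactor h₂r v x)
        fun w => by rw [eval_cofactor h₁o, eval_cofactor h₂o, he]
    rw [← mk_cofactor h₁r v, ← mk_cofactor h₂r v, hcof, hcof]
  · obtain ⟨s, rfl⟩ := exists_eq_leaf_of_orderedFrom h₁o (not_lt.mp hb)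
    obtain ⟨t, rfl⟩ := exists_eq_leaf_of_orderedFrom h₂o (not_lt.mp hb)
    exact congrArg leaf (he fun _ => false)
termination_by n - b

end MTBDD

/-- Canonicity of reduced ordered MTBDDs: two reduced ordered MTBDDs represent
the same function `B^P → S` if and only if they are equal. -/
theorem mtbdd_canonicity {n : ℕ} {S : Type} (m₁ m₂ : MTBDD n S)
    (h₁o : m₁.Ordered) (h₁r : m₁.Reduced) (h₂o : m₂.Ordered) (h₂r : m₂.Reduced) :
    (∀ w : Fin n → Bool, m₁.eval w = m₂.eval w) ↔ m₁ = m₂ :=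
  ⟨MTBDD.eq_of_eval_eq h₁o h₁r h₂o h₂r, fun h _ => h ▸ rfl⟩
end

section
/- The apply operation on MTBDDs is correct: for MTBDDs m₁, m₂ over the same ordered variable set P representing functions f₁ : B^P → S₁ and f₂ : B^P → S₂, and any binary operation ⊙ : S₁ × S₂ → S₃, the MTBDD m₁ ⊙ m₂ constructed by the recursive apply procedure represents the function w ↦ f₁(w) ⊙ f₂(w). -/
namespace MTBDD

/-- The recursive `apply` procedure combining two MTBDDs with a binary
operation on terminals, recursing on the topmost variable. -/
def apply {n : ℕ} {S₁ S₂ S₃ : Type} (op : S₁ → S₂ → S₃) :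
    MTBDD n S₁ → MTBDD n S₂ → MTBDD n S₃
  | .leaf a, .leaf b => .leaf (op a b)
  | .leaf a, .node q lo hi => .node q (apply op (.leaf a) lo) (apply op (.leaf a) hi)
  | .node p lo hi, .leaf b => .node p (apply op lo (.leaf b)) (apply op hi (.leaf b))
  | .node p lo hi, .node q lo' hi' =>
    if p < q then
      .node p (apply op lo (.node q lo' hi')) (apply op hi (.node q lo' hi'))
    else if q < p then
      .node q (apply op (.node p lo hi) lo') (apply op (.node p lo hi) hi')
    else
      .node p (apply op lo lo') (apply op hi hi')
  termination_by m₁ m₂ => sizeOf m₁ + sizeOf m₂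
  decreasing_by all_goals simp +arith +decide

theorem eval_apply {n : ℕ} {S₁ S₂ S₃ : Type} (op : S₁ → S₂ → S₃) (m₁ : MTBDD n S₁)
    (m₂ : MTBDD n S₂) (w : Fin n → Bool) :
    (apply op m₁ m₂).eval w = op (m₁.eval w) (m₂.eval w) := by
  induction m₁, m₂ using apply.induct with
  | case1 => rw [apply]; rfl
  | case2 a q lo hi ihlo ihhi =>
    rw [apply]
    simp only [eval, ihlo, ihhi]
    exact (apply_ite ..).symm
  | case3 p lo hi b ihlo ihhi =>
    rw [apply]
    simp only [eval, ihlo, ihhi]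
    exact (apply_ite (op · _) ..).symm
  | case4 p lo hi q lo' hi' hpq ihlo ihhi =>
    rw [apply, if_pos hpq]
    simp only [eval, ihlo, ihhi]
    exact (apply_ite (op · _) ..).symm
  | case5 p lo hi q lo' hi' hpq hqp ihlo ihhi =>
    rw [apply, if_neg hpq, if_pos hqp]
    simp only [eval, ihlo, ihhi]
    exact (apply_ite ..).symm
  | case6 p lo hi q lo' hi' hpq hqp ihlo ihhi =>
    obtain rfl : p = q := le_antisymm (not_lt.1 hqp) (not_lt.1 hpq)
    rw [apply, if_neg hpq, if_neg hqp]
    simp only [eval, ihlo, ihhi]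
    exact (apply_ite₂ ..).symm

end MTBDD

theorem mtbdd_apply_correct_general {n : ℕ} {S₁ S₂ S₃ : Type} (op : S₁ → S₂ → S₃)
    (m₁ : MTBDD n S₁) (m₂ : MTBDD n S₂) :
    ∀ w : Fin n → Bool, (MTBDD.apply op m₁ m₂).eval w = op (m₁.eval w) (m₂.eval w) :=
  MTBDD.eval_apply op m₁ m₂

/-- Correctness of `apply`: the constructed MTBDD represents the pointwise
combination of the two represented functions. -/
theorem mtbdd_apply_correct {n : ℕ} {S₁ S₂ S₃ : Type} (op : S₁ → S₂ → S₃)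
    (m₁ : MTBDD n S₁) (m₂ : MTBDD n S₂)
    (h₁ : m₁.Ordered) (h₂ : m₂.Ordered) :
    ∀ w : Fin n → Bool, (MTBDD.apply op m₁ m₂).eval w = op (m₁.eval w) (m₂.eval w) :=
  mtbdd_apply_correct_general op m₁ m₂
end

section
/- Correctness of the LTLf-to-MTDFA translation: for any LTLf formula φ over P, the MTDFA A_φ with states Q (closed under leaves of tr), initial state [φ]≡ and transition function Δ = tr satisfies L(A_φ) = L(φ): a finite nonempty word σ is accepted by A_φ (i.e., the Boolean component of the terminal reached after reading σ is ⊤) if and only if σ,0 ⊨ φ. -/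
namespace MTBDD

/-- Apply a function to every terminal of an MTBDD. -/
def mapLeaf {n : ℕ} {S T : Type} (f : S → T) : MTBDD n S → MTBDD n T
  | .leaf s => .leaf (f s)
  | .node p lo hi => .node p (mapLeaf f lo) (mapLeaf f hi)

/-- The list of terminal values appearing in an MTBDD. -/
def leavesList {n : ℕ} {S : Type} : MTBDD n S → List S
  | .leaf s => [s]
  | .node _ lo hi => leavesList lo ++ leavesList hi

end MTBDD

/-- Negation of an MTBDD with terminals in `LTLf × Bool`; the formula component
is taken up to propositional equivalence via the representative function `rep`. -/
def mnot {n : ℕ} (rep : LTLf (Fin n) → LTLf (Fin n)) :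
    MTBDD n (LTLf (Fin n) × Bool) → MTBDD n (LTLf (Fin n) × Bool) :=
  MTBDD.mapLeaf (fun a => (rep (.not a.1), !a.2))

/-- Conjunction of MTBDDs with terminals in `LTLf × Bool`, combining terminals
componentwise (formulas up to propositional equivalence via `rep`). -/
def mand {n : ℕ} (rep : LTLf (Fin n) → LTLf (Fin n)) :
    MTBDD n (LTLf (Fin n) × Bool) → MTBDD n (LTLf (Fin n) × Bool) →
      MTBDD n (LTLf (Fin n) × Bool) :=
  MTBDD.apply (fun a b => (rep (.and a.1 b.1), a.2 && b.2))

/-- Disjunction of MTBDDs with terminals in `LTLf × Bool`. -/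
def mor {n : ℕ} (rep : LTLf (Fin n) → LTLf (Fin n)) :
    MTBDD n (LTLf (Fin n) × Bool) → MTBDD n (LTLf (Fin n) × Bool) →
      MTBDD n (LTLf (Fin n) × Bool) :=
  MTBDD.apply (fun a b => (rep (.or a.1 b.1), a.2 || b.2))

/-- The translation `tr` from LTLf formulas to MTBDDs with terminals labeled by
pairs (formula, Boolean), formula components being taken up to propositional
equivalence through the representative function `rep`. -/
def tr {n : ℕ} (rep : LTLf (Fin n) → LTLf (Fin n)) :
    LTLf (Fin n) → MTBDD n (LTLf (Fin n) × Bool)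
  | .tt => .leaf (rep .tt, true)
  | .ff => .leaf (rep .ff, false)
  | .atom p => .node p (.leaf (rep .ff, false)) (.leaf (rep .tt, true))
  | .not α => mnot rep (tr rep α)
  | .and α β => mand rep (tr rep α) (tr rep β)
  | .or α β => mor rep (tr rep α) (tr rep β)
  | .wnext α => .leaf (rep α, true)
  | .snext α => .leaf (rep α, false)
  | .untl α β => mor rep (tr rep β) (mand rep (tr rep α) (.leaf (rep (.untl α β), false)))
  | .release α β => mand rep (tr rep β) (mor rep (tr rep α) (.leaf (rep (.release α β), true)))
  | .glob α => mand rep (tr rep α) (.leaf (rep (.glob α), true))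
  | .fin α => mor rep (tr rep α) (.leaf (rep (.fin α), false))

/-- Run of the MTDFA `A_φ` on a word: starting from `([φ]≡, ⊥)`, repeatedly
evaluate the MTBDD of the current state on the next assignment. -/
def runMTDFA {n : ℕ} (rep : LTLf (Fin n) → LTLf (Fin n)) (φ : LTLf (Fin n))
    (σ : List (Fin n → Bool)) : LTLf (Fin n) × Bool :=
  σ.foldl (fun qb w => (tr rep qb.1).eval w) (rep φ, false)

/-!
Read a state `(q, b)` of the automaton, reached after a nonempty prefix, as a claim about the
rest `τ` of the word (`ResidualSat τ (q, b)`): if `τ` is empty, the prefix is accepted iff `b`;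
otherwise `τ` must satisfy `q`. Reading a letter `w` in state `q` leads to a state making this
claim exactly when `w :: τ` satisfies `q`, by induction on `q`: the terminal `(γ, ⊤)` says `X γ`
and `(γ, ⊥)` says `X' γ`, so the clauses of `tr` for `U`, `R`, `G`, `F` are the LTLf expansion
laws, e.g. `α U β ≡ β ∨ (α ∧ X' (α U β))`; and `rep` only replaces formulas by propositionally
equivalent ones, which have the same models.
-/

theorem MTBDD.eval_mapLeaf {n : ℕ} {S T : Type} (f : S → T) (m : MTBDD n S)
    (w : Fin n → Bool) : (m.mapLeaf f).eval w = f (m.eval w) := by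
  induction m with
  | leaf s => rfl
  | node p lo hi ihlo ihhi => by_cases hw : w p <;> simp [mapLeaf, eval, hw, ihlo, ihhi]

theorem MTBDD.eval_apply_s15 {n : ℕ} {S₁ S₂ S₃ : Type} (op : S₁ → S₂ → S₃)
    (m₁ : MTBDD n S₁) (m₂ : MTBDD n S₂) (w : Fin n → Bool) :
    (apply op m₁ m₂).eval w = op (m₁.eval w) (m₂.eval w) := by
  induction m₁ generalizing m₂ with
  | leaf a =>
    induction m₂ with
    | leaf b => rw [apply]; rfl
    | node q lo hi ihlo ihhi => by_cases hw : w q <;> simp [apply, eval, hw, ihlo, ihhi]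
  | node p lo hi ihlo ihhi =>
    induction m₂ with
    | leaf b => by_cases hw : w p <;> simp [apply, eval, hw, ihlo, ihhi]
    | node q lo' hi' ihlo' ihhi' =>
      rw [apply]
      rcases lt_trichotomy p q with h | rfl | h
      · by_cases hw : w p <;> simp [h, eval, hw, ihlo, ihhi]
      · by_cases hw : w p <;> simp [eval, hw, ihlo, ihhi]
      · by_cases hw : w q <;> simp [h, not_lt_of_gt h, eval, hw, ihlo', ihhi']

theorem Nat.exists_succ_le_and_iff {p : ℕ → Prop} {i : ℕ} :
    (∃ j, i + 1 ≤ j ∧ p j) ↔ ∃ j, i ≤ j ∧ p (j + 1) :=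
  ⟨fun ⟨j, hj, h⟩ => ⟨j - 1, by omega, by rwa [Nat.sub_add_cancel (by omega)]⟩,
    fun ⟨j, hj, h⟩ => ⟨j + 1, by omega, h⟩⟩

theorem Nat.forall_succ_le_imp_iff {p : ℕ → Prop} {i : ℕ} :
    (∀ j, i + 1 ≤ j → p j) ↔ ∀ j, i ≤ j → p (j + 1) :=
  ⟨fun h j hj => h (j + 1) (by omega),
    fun h j hj => by simpa [Nat.sub_add_cancel (by omega : 1 ≤ j)] using h (j - 1) (by omega)⟩

namespace LTLf

variable {P : Type}

theorem bEval_sat_s15 (σ : List (P → Bool)) (i : ℕ) (α : LTLf P) :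
    BEval (fun δ => Sat σ δ i) α ↔ Sat σ α i := by
  induction α <;> simp_all [BEval, Sat]

theorem PropEquiv.sat_iff_s15 {α β : LTLf P} (h : PropEquiv α β) (σ : List (P → Bool)) (i : ℕ) :
    Sat σ α i ↔ Sat σ β i :=
  (bEval_sat_s15 σ i α).symm.trans ((h _).trans (bEval_sat_s15 σ i β))

theorem sat_cons_succ (w : P → Bool) (τ : List (P → Bool)) (α : LTLf P) (i : ℕ) :
    Sat (w :: τ) α (i + 1) ↔ Sat τ α i := by
  induction α generalizing i <;>
    simp only [Sat, List.length_cons, List.getD_cons_succ, Nat.exists_succ_le_and_iff,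
      Nat.forall_succ_le_imp_iff, Nat.add_lt_add_iff_right, Nat.add_right_cancel_iff, *]

section Expansion

variable {σ : List (P → Bool)} {i : ℕ}

theorem sat_untl_iff (hi : i < σ.length) (α β : LTLf P) :
    Sat σ (.untl α β) i ↔ Sat σ β i ∨ Sat σ α i ∧ Sat σ (.snext (.untl α β)) i := by
  simp only [Sat]
  constructor
  · rintro ⟨j, hij, hj, hβ, hα⟩
    rcases hij.eq_or_lt with rfl | hij
    · exact .inl hβ
    · exact .inr ⟨hα i le_rfl hij, by omega, j, hij, hj, hβ, fun k hk => hα k (by omega)⟩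
  · rintro (hβ | ⟨hα, -, j, hij, hj, hβ, hα'⟩)
    · exact ⟨i, le_rfl, hi, hβ, fun k hk hki => absurd hki (by omega)⟩
    · refine ⟨j, by omega, hj, hβ, fun k hik hkj => ?_⟩
      rcases hik.eq_or_lt with rfl | hik
      exacts [hα, hα' k hik hkj]

theorem sat_release_iff (hi : i < σ.length) (α β : LTLf P) :
    Sat σ (.release α β) i ↔ Sat σ β i ∧ (Sat σ α i ∨ Sat σ (.wnext (.release α β)) i) := by
  simp only [Sat]
  constructor
  · intro h
    have hβ : Sat σ β i := (h i le_rfl hi).resolve_right fun ⟨k, hik, hki, _⟩ => by omega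
    refine ⟨hβ, or_iff_not_imp_left.2 fun hα => .inr fun j hij hj => ?_⟩
    refine (h j (by omega) hj).imp_right fun ⟨k, hik, hkj, hαk⟩ => ⟨k, ?_, hkj, hαk⟩
    rcases hik.eq_or_lt with rfl | hik
    exacts [absurd hαk hα, hik]
  · rintro ⟨hβ, hnow⟩ j hij hj
    rcases hij.eq_or_lt with rfl | hij
    · exact .inl hβ
    rcases hnow with hα | hlast | hnext
    · exact .inr ⟨i, le_rfl, hij, hα⟩
    · omega
    · exact (hnext j hij hj).imp_right fun ⟨k, hik, hkj, hαk⟩ => ⟨k, by omega, hkj, hαk⟩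

theorem sat_glob_iff (hi : i < σ.length) (α : LTLf P) :
    Sat σ (.glob α) i ↔ Sat σ α i ∧ Sat σ (.wnext (.glob α)) i := by
  simp only [Sat]
  constructor
  · exact fun h => ⟨h i le_rfl hi, .inr fun j hij => h j (by omega)⟩
  · rintro ⟨hα, hlast | hnext⟩ j hij hj <;> rcases hij.eq_or_lt with rfl | hij
    exacts [hα, by omega, hα, hnext j hij hj]

theorem sat_fin_iff (hi : i < σ.length) (α : LTLf P) :
    Sat σ (.fin α) i ↔ Sat σ α i ∨ Sat σ (.snext (.fin α)) i := by
  simp only [Sat]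
  constructor
  · rintro ⟨j, hij, hj, hα⟩
    rcases hij.eq_or_lt with rfl | hij
    exacts [.inl hα, .inr ⟨by omega, j, hij, hj, hα⟩]
  · rintro (hα | ⟨-, j, hij, hj, hα⟩)
    exacts [⟨i, le_rfl, hi, hα⟩, ⟨j, by omega, hj, hα⟩]

end Expansion

end LTLf

def ResidualSat {P : Type} : List (P → Bool) → LTLf P × Bool → Prop
  | [], qb => qb.2 = true
  | τ@(_ :: _), qb => LTLf.Sat τ qb.1 0

section ResidualSat

variable {P : Type} {rep : LTLf P → LTLf P}

theorem residualSat_not (hrep : ∀ α, (rep α).PropEquiv α)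
    (τ : List (P → Bool)) (a : LTLf P × Bool) :
    ResidualSat τ (rep (.not a.1), !a.2) ↔ ¬ ResidualSat τ a := by
  cases τ
  · simp [ResidualSat]
  · exact (hrep _).sat_iff_s15 _ _

theorem residualSat_and (hrep : ∀ α, (rep α).PropEquiv α)
    (τ : List (P → Bool)) (a b : LTLf P × Bool) :
    ResidualSat τ (rep (.and a.1 b.1), a.2 && b.2) ↔ ResidualSat τ a ∧ ResidualSat τ b := by
  cases τ
  · simp [ResidualSat]
  · exact (hrep _).sat_iff_s15 _ _

theorem residualSat_or (hrep : ∀ α, (rep α).PropEquiv α)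
    (τ : List (P → Bool)) (a b : LTLf P × Bool) :
    ResidualSat τ (rep (.or a.1 b.1), a.2 || b.2) ↔ ResidualSat τ a ∨ ResidualSat τ b := by
  cases τ
  · simp [ResidualSat]
  · exact (hrep _).sat_iff_s15 _ _

theorem residualSat_true_iff_wnext (hrep : ∀ α, (rep α).PropEquiv α) (w : P → Bool)
    (τ : List (P → Bool)) (α : LTLf P) :
    ResidualSat τ (rep α, true) ↔ LTLf.Sat (w :: τ) (.wnext α) 0 := by
  cases τ
  · simp [ResidualSat, LTLf.Sat]
  · simp [ResidualSat, LTLf.Sat, (hrep _).sat_iff_s15, LTLf.sat_cons_succ]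

theorem residualSat_false_iff_snext (hrep : ∀ α, (rep α).PropEquiv α) (w : P → Bool)
    (τ : List (P → Bool)) (α : LTLf P) :
    ResidualSat τ (rep α, false) ↔ LTLf.Sat (w :: τ) (.snext α) 0 := by
  cases τ
  · simp [ResidualSat, LTLf.Sat]
  · simp [ResidualSat, LTLf.Sat, (hrep _).sat_iff_s15, LTLf.sat_cons_succ]

end ResidualSat

section Translation

variable {n : ℕ} {rep : LTLf (Fin n) → LTLf (Fin n)}

theorem eval_mnot (m : MTBDD n (LTLf (Fin n) × Bool)) (w : Fin n → Bool) :
    (mnot rep m).eval w = (rep (.not (m.eval w).1), !(m.eval w).2) :=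
  MTBDD.eval_mapLeaf _ m w

theorem eval_mand (m₁ m₂ : MTBDD n (LTLf (Fin n) × Bool)) (w : Fin n → Bool) :
    (mand rep m₁ m₂).eval w =
      (rep (.and (m₁.eval w).1 (m₂.eval w).1), (m₁.eval w).2 && (m₂.eval w).2) :=
  MTBDD.eval_apply_s15 _ m₁ m₂ w

theorem eval_mor (m₁ m₂ : MTBDD n (LTLf (Fin n) × Bool)) (w : Fin n → Bool) :
    (mor rep m₁ m₂).eval w =
      (rep (.or (m₁.eval w).1 (m₂.eval w).1), (m₁.eval w).2 || (m₂.eval w).2) :=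
  MTBDD.eval_apply_s15 _ m₁ m₂ w

theorem residualSat_eval_tr (hrep : ∀ α, (rep α).PropEquiv α) (α : LTLf (Fin n))
    (w : Fin n → Bool) (τ : List (Fin n → Bool)) :
    ResidualSat τ ((tr rep α).eval w) ↔ LTLf.Sat (w :: τ) α 0 := by
  induction α with
  | tt => exact (residualSat_true_iff_wnext hrep w τ _).trans (by simp [LTLf.Sat])
  | ff => exact (residualSat_false_iff_snext hrep w τ _).trans (by simp [LTLf.Sat])
  | atom p =>
    by_cases hw : w p
    · simpa [tr, MTBDD.eval, hw, LTLf.Sat] using residualSat_true_iff_wnext hrep w τ .tt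
    · simpa [tr, MTBDD.eval, hw, LTLf.Sat] using residualSat_false_iff_snext hrep w τ .ff
  | not α ih => rw [tr, eval_mnot, residualSat_not hrep, ih]; rfl
  | and α β ihα ihβ => rw [tr, eval_mand, residualSat_and hrep, ihα, ihβ]; rfl
  | or α β ihα ihβ => rw [tr, eval_mor, residualSat_or hrep, ihα, ihβ]; rfl
  | wnext α => exact residualSat_true_iff_wnext hrep w τ α
  | snext α => exact residualSat_false_iff_snext hrep w τ α
  | untl α β ihα ihβ =>
    rw [tr, eval_mor, residualSat_or hrep, eval_mand, residualSat_and hrep, ihα, ihβ,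
      MTBDD.eval, residualSat_false_iff_snext hrep w, LTLf.sat_untl_iff (Nat.succ_pos _)]
  | release α β ihα ihβ =>
    rw [tr, eval_mand, residualSat_and hrep, eval_mor, residualSat_or hrep, ihα, ihβ,
      MTBDD.eval, residualSat_true_iff_wnext hrep w, LTLf.sat_release_iff (Nat.succ_pos _)]
  | glob α ih =>
    rw [tr, eval_mand, residualSat_and hrep, ih, MTBDD.eval, residualSat_true_iff_wnext hrep w,
      LTLf.sat_glob_iff (Nat.succ_pos _)]
  | fin α ih =>
    rw [tr, eval_mor, residualSat_or hrep, ih, MTBDD.eval, residualSat_false_iff_snext hrep w,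
      LTLf.sat_fin_iff (Nat.succ_pos _)]

theorem residualSat_nil_foldl_tr (hrep : ∀ α, (rep α).PropEquiv α) (τ : List (Fin n → Bool))
    (qb : LTLf (Fin n) × Bool) :
    ResidualSat [] (τ.foldl (fun qb w => (tr rep qb.1).eval w) qb) ↔ ResidualSat τ qb := by
  induction τ generalizing qb with
  | nil => rfl
  | cons w τ ih => exact (ih _).trans (residualSat_eval_tr hrep qb.1 w τ)

end Translation

theorem mtdfa_translation_correct_general {n : ℕ} (rep : LTLf (Fin n) → LTLf (Fin n))
    (hrep₁ : ∀ α, LTLf.PropEquiv (rep α) α)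
    (φ : LTLf (Fin n)) (σ : List (Fin n → Bool)) (hσ : σ ≠ []) :
    (runMTDFA rep φ σ).2 = true ↔ LTLf.Sat σ φ 0 := by
  obtain ⟨w, τ, rfl⟩ := List.exists_cons_of_ne_nil hσ
  exact (residualSat_nil_foldl_tr hrep₁ (w :: τ) (rep φ, false)).trans ((hrep₁ φ).sat_iff_s15 _ _)

/-- Correctness of the LTLf-to-MTDFA translation: a finite nonempty word is
accepted by `A_φ` iff it satisfies `φ`. -/
theorem mtdfa_translation_correct {n : ℕ} (rep : LTLf (Fin n) → LTLf (Fin n))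
    (hrep₁ : ∀ α, LTLf.PropEquiv (rep α) α)
    (hrep₂ : ∀ α β, LTLf.PropEquiv α β → rep α = rep β)
    (φ : LTLf (Fin n)) (σ : List (Fin n → Bool)) (hσ : σ ≠ []) :
    (runMTDFA rep φ σ).2 = true ↔ LTLf.Sat σ φ 0 :=
  mtdfa_translation_correct_general rep hrep₁ φ σ hσ
end

section
/- Soundness of the one-step realizability abstraction: for an LTLf formula φ over disjoint inputs I and outputs O, let φ_r be the Boolean formula obtained by the rules ff_r = ff, tt_r = tt, p_r = p, (X'α)_r = ff, (Xα)_r = tt, (Gα)_r = α_r, (Fα)_r = α_r, (αRβ)_r = β_r, (αUβ)_r = β_r, (¬α)_r = ¬α_r, (α⊙β)_r = α_r ⊙ β_r. If φ_r is realizable as a Boolean formula (there is a function g : B^I → B^O such that for all i ∈ B^I the combined assignment i ⊔ g(i) satisfies φ_r), then φ is Mealy-realizable. -/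
/-- Satisfaction of a (Boolean) formula by a single assignment; temporal
operators are treated as unsatisfied (they do not occur in one-step
abstractions). -/
def LTLf.BSat {P : Type} (w : P → Bool) : LTLf P → Prop
  | .tt => True
  | .ff => False
  | .atom p => w p = true
  | .not φ => ¬ LTLf.BSat w φ
  | .and φ ψ => LTLf.BSat w φ ∧ LTLf.BSat w ψ
  | .or φ ψ => LTLf.BSat w φ ∨ LTLf.BSat w ψ
  | .wnext _ => False
  | .snext _ => False
  | .untl _ _ => False
  | .release _ _ => False
  | .glob _ => False
  | .fin _ => False

/-- The one-step realizability abstraction `φ_r`. -/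
def LTLf.osr {P : Type} : LTLf P → LTLf P
  | .tt => .tt
  | .ff => .ff
  | .atom p => .atom p
  | .not φ => .not φ.osr
  | .and φ ψ => .and φ.osr ψ.osr
  | .or φ ψ => .or φ.osr ψ.osr
  | .wnext _ => .tt
  | .snext _ => .ff
  | .untl _ ψ => ψ.osr
  | .release _ ψ => ψ.osr
  | .glob φ => φ.osr
  | .fin φ => φ.osr

/-- Mealy realizability of an LTLf formula over inputs `I` and outputs `O`:
there is a controller (whose output may depend on the history of inputs,
including the current one) such that every infinite input sequence has a finite
nonempty prefix of the combined evolution satisfying `φ`. -/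
def MealyRealizable {I O : Type} (φ : LTLf (I ⊕ O)) : Prop :=
  ∃ ρ : List (I → Bool) → (O → Bool),
    ∀ σ : ℕ → (I → Bool), ∃ k : ℕ,
      LTLf.Sat
        (List.ofFn (fun t : Fin (k + 1) =>
          Sum.elim (σ t) (ρ (List.ofFn (fun s : Fin ((t : ℕ) + 1) => σ s)))))
        φ 0

theorem LTLf.sat_singleton_iff_bsat_osr {P : Type} (φ : LTLf P) (w : P → Bool) :
    Sat [w] φ 0 ↔ BSat w φ.osr := by
  -- On a one-letter word every temporal quantifier ranges over position 0 alone, and the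
  -- successor position does not exist: `X'` holds vacuously and `X` fails.
  induction φ <;> simp_all [Sat, BSat, osr]

theorem MealyRealizable.of_sat_singleton {I O : Type} {φ : LTLf (I ⊕ O)}
    (g : (I → Bool) → (O → Bool)) (hg : ∀ i : I → Bool, LTLf.Sat [Sum.elim i (g i)] φ 0) :
    MealyRealizable φ :=
  ⟨fun l => g (l.getLastD fun _ => false), fun σ => ⟨0, by simpa using hg (σ 0)⟩⟩

/-- Soundness of the one-step realizability abstraction: if the Boolean formula
`φ_r` is realizable, then `φ` is Mealy-realizable. -/
theorem one_step_realizability_sound {I O : Type} (φ : LTLf (I ⊕ O))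
    (g : (I → Bool) → (O → Bool))
    (hg : ∀ i : I → Bool, LTLf.BSat (Sum.elim i (g i)) φ.osr) :
    MealyRealizable φ :=
  MealyRealizable.of_sat_singleton g fun i =>
    (LTLf.sat_singleton_iff_bsat_osr φ _).2 (hg i)
end
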